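/- arXiv:1305.6342 — 2 statements merged into one kernel-verified Lean document; each statement's English description precedes it below -/
import Mathlib

section
/- Let d > 1, K, M > 0 with KM ≥ 1, q ≥ 1, ε > 0 with e^{εq}(KM)^β < d for some β ∈ (0,1]. Suppose (U_j)_{j≥0} are real-valued functions on a metric space (C, ρ) satisfying |U_j(R) − U_j(R′)| ≤ r·e^{εqj}·ρ(Λ^j R, Λ^j R′)^β for maps Λ_j : C → C that are each Lipschitz with constant K·e^{εqj}, where Λ^j = Λ_{j-1}∘⋯∘Λ_0. If additionally the first N maps have Lipschitz constants bounded by KM (independent of j), then the function U := ∑_{j≥0} d^{-j} U_j ∘ Λ^j is β-Hölder continuous on (C, ρ). -/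
open Real NNReal

lemma holderWith_of_dist_le' {X : Type*} [MetricSpace X] {c β : ℝ≥0} {f : X → ℝ}
    (h : ∀ x y, dist (f x) (f y) ≤ (c : ℝ) * dist x y ^ (β : ℝ)) : HolderWith c β f := by
  intro x y
  rw [edist_dist, edist_dist]
  calc ENNReal.ofReal (dist (f x) (f y)) ≤ ENNReal.ofReal ((c : ℝ) * dist x y ^ (β : ℝ)) :=
        ENNReal.ofReal_le_ofReal (h x y)
    _ = (c : ENNReal) * ENNReal.ofReal (dist x y) ^ (β : ℝ) := by
        rw [ENNReal.ofReal_mul c.coe_nonneg,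
          ← ENNReal.ofReal_rpow_of_nonneg dist_nonneg β.coe_nonneg,
          ENNReal.ofReal_coe_nnreal]

/-- Abstract Hölder continuity argument: if `U_j` are `β`-Hölder with constants
`r e^{εqj}`, the maps `Λ_j` are Lipschitz with constants `K e^{εqj}`, the compositions
`Λ^j = Λ_{j-1}∘⋯∘Λ_0` are Lipschitz with constants `(KM)^j`, and `e^{εq}(KM)^β < d`,
then `U = ∑_j d^{-j} U_j ∘ Λ^j` is `β`-Hölder continuous. -/
theorem stmt13 {C : Type*} [MetricSpace C]
    (d K M q ε r : ℝ) (β : ℝ≥0)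
    (hd : 1 < d) (hK : 0 < K) (hM : 0 < M) (hKM : 1 ≤ K * M) (hq : 1 ≤ q)
    (hε : 0 < ε) (hr : 0 ≤ r) (hβ0 : 0 < β) (hβ1 : β ≤ 1)
    (hcontract : Real.exp (ε * q) * (K * M) ^ (β : ℝ) < d)
    (Uj : ℕ → C → ℝ) (Λseq : ℕ → C → C) (Λiter : ℕ → C → C)
    (hiter0 : Λiter 0 = id) (hiterS : ∀ j, Λiter (j + 1) = Λseq j ∘ Λiter j)
    (hΛj : ∀ (j : ℕ) (R R' : C),
      dist (Λseq j R) (Λseq j R') ≤ K * Real.exp (ε * q * j) * dist R R')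
    (hΛ : ∀ (j : ℕ) (R R' : C),
      dist (Λiter j R) (Λiter j R') ≤ (K * M) ^ j * dist R R')
    (hU : ∀ (j : ℕ) (R R' : C),
      |Uj j R - Uj j R'| ≤ r * Real.exp (ε * q * j) * dist R R' ^ (β : ℝ))
    (hsum : ∀ R : C, Summable fun j : ℕ => (1 / d) ^ j * Uj j (Λiter j R)) :
    ∃ c : ℝ≥0, HolderWith c β (fun R : C => ∑' j : ℕ, (1 / d) ^ j * Uj j (Λiter j R)) := by
  have hd0 : (0:ℝ) < d := lt_trans one_pos hd
  set x : ℝ := Real.exp (ε * q) * (K * M) ^ (β : ℝ) / d with hx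
  have hx0 : 0 ≤ x := by positivity
  have hx1 : x < 1 := (div_lt_one hd0).2 hcontract
  set c : ℝ := r / (1 - x) with hc
  have hc0 : 0 ≤ c := div_nonneg hr (by linarith)
  refine ⟨c.toNNReal, holderWith_of_dist_le' fun R R' => ?_⟩
  rw [Real.coe_toNNReal _ hc0]
  set D : ℝ := dist R R' with hD
  have hD0 : 0 ≤ D := dist_nonneg
  rw [Real.dist_eq, ← Summable.tsum_sub (hsum R) (hsum R')]
  have hgeom : HasSum (fun j : ℕ => r * D ^ (β : ℝ) * x ^ j)
      (r * D ^ (β : ℝ) * (1 - x)⁻¹) := by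
    exact (hasSum_geometric_of_lt_one hx0 hx1).mul_left _
  have hbound : ∀ j : ℕ,
      ‖(1 / d) ^ j * Uj j (Λiter j R) - (1 / d) ^ j * Uj j (Λiter j R')‖
        ≤ r * D ^ (β : ℝ) * x ^ j := by
    intro j
    rw [← mul_sub, norm_mul, Real.norm_eq_abs, Real.norm_eq_abs]
    have h1 : |Uj j (Λiter j R) - Uj j (Λiter j R')|
        ≤ r * Real.exp (ε * q * j) * ((K * M) ^ j * D) ^ (β : ℝ) := by
      refine (hU j _ _).trans ?_
      exact mul_le_mul_of_nonneg_left
        (Real.rpow_le_rpow dist_nonneg (hΛ j R R') β.coe_nonneg) (by positivity)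
    have habs : |(1 / d : ℝ) ^ j| = (1 / d) ^ j := by
      rw [abs_pow, abs_of_pos (by positivity)]
    rw [habs]
    calc (1 / d : ℝ) ^ j * |Uj j (Λiter j R) - Uj j (Λiter j R')|
        ≤ (1 / d) ^ j * (r * Real.exp (ε * q * j) * ((K * M) ^ j * D) ^ (β : ℝ)) := by
          apply mul_le_mul_of_nonneg_left h1 (by positivity)
      _ = r * D ^ (β : ℝ) * x ^ j := by
          rw [Real.mul_rpow (by positivity) hD0]
          have e1 : Real.exp (ε * q * j) = Real.exp (ε * q) ^ j := by
            rw [← Real.exp_nat_mul]; ring_nf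
          have e2 : ((K * M : ℝ) ^ j) ^ (β : ℝ) = ((K * M) ^ (β : ℝ)) ^ j := by
            rw [← Real.rpow_natCast (K * M) j, ← Real.rpow_mul (by positivity),
              mul_comm (j : ℝ) (β : ℝ), Real.rpow_mul (by positivity),
              Real.rpow_natCast]
          rw [e1, e2, hx, div_pow, div_pow, mul_pow]
          field_simp
          ring
  calc |∑' j : ℕ, ((1 / d) ^ j * Uj j (Λiter j R) - (1 / d) ^ j * Uj j (Λiter j R'))|
      ≤ r * D ^ (β : ℝ) * (1 - x)⁻¹ := tsum_of_norm_bounded hgeom hbound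
    _ = c * D ^ (β : ℝ) := by rw [hc]; ring
end

section
/- Let (X, F, α, T) be an ergodic measure-preserving system with transfer operator P (adjoint of the Koopman operator). Suppose ψ ∈ L²(α), ∫ψ dα = 0, and ∑_{n≥0} ‖Pⁿψ‖_{L²} < ∞. Then σ² := lim_{N→∞} (1/N) ∫ (∑_{n=0}^{N-1} ψ∘Tⁿ)² dα exists and is finite. -/
/-!
The Koopman operator `U` acts on `L²` as the isometry `f ↦ f ∘ T`, so `⟪Uᵐψ, Uᵐ⁺ʲψ⟫` equals
the correlation `cⱼ = ⟪ψ, Uʲψ⟫ = ⟪ψ, Pʲψ⟫`, which is bounded by `‖ψ‖ ‖Pʲψ‖`; hence `∑ cⱼ`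
converges.
Expanding the square, `∫ (∑_{n<N} ψ ∘ Tⁿ)² = ∑_{k<N} (c₀ + 2 ∑_{j<k} c_{j+1})`, a sum of terms
converging to `c₀ + 2 ∑_{j≥1} cⱼ`; its Cesàro means converge to the same limit.
-/

open MeasureTheory Filter Finset Topology

section StationarySequence

variable {E : Type*} [NormedAddCommGroup E] [InnerProductSpace ℝ E] {v : ℕ → E} {c : ℕ → ℝ}

theorem norm_sum_range_sq_of_inner_eq (hv : ∀ m j, inner ℝ (v m) (v (m + j)) = c j) (N : ℕ) :
    ‖∑ n ∈ range N, v n‖ ^ 2 = ∑ k ∈ range N, (c 0 + 2 * ∑ j ∈ range k, c (j + 1)) := by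
  induction N with
  | zero => simp
  | succ N ih =>
    have hcross : inner ℝ (∑ m ∈ range N, v m) (v N) = ∑ j ∈ range N, c (j + 1) := by
      rw [sum_inner, ← sum_range_reflect]
      refine sum_congr rfl fun m hm => ?_
      have hm : m < N := mem_range.mp hm
      rw [← hv (N - 1 - m) (m + 1)]
      congr 2
      omega
    have hdiag : ‖v N‖ ^ 2 = c 0 := by
      rw [← real_inner_self_eq_norm_sq, ← hv N 0, add_zero]
    rw [sum_range_succ, sum_range_succ, norm_add_sq_real, ih, hcross, hdiag]
    ring

theorem tendsto_inv_mul_norm_sum_range_sq (hv : ∀ m j, inner ℝ (v m) (v (m + j)) = c j)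
    (hc : Summable c) :
    Tendsto (fun N : ℕ => (N : ℝ)⁻¹ * ‖∑ n ∈ range N, v n‖ ^ 2) atTop
      (𝓝 (c 0 + 2 * ∑' j, c (j + 1))) := by
  have hpartial : Tendsto (fun k => c 0 + 2 * ∑ j ∈ range k, c (j + 1)) atTop
      (𝓝 (c 0 + 2 * ∑' j, c (j + 1))) :=
    (((summable_nat_add_iff 1).mpr hc).hasSum.tendsto_sum_nat.const_mul 2).const_add _
  simpa only [norm_sum_range_sq_of_inner_eq hv] using hpartial.cesaro

end StationarySequence

theorem inner_pow_apply_eq_inner_pow_apply {𝕜 E : Type*} [RCLike 𝕜] [NormedAddCommGroup E]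
    [InnerProductSpace 𝕜 E] {U P : E →L[𝕜] E}
    (hadj : ∀ f g, inner 𝕜 (U f) g = inner 𝕜 f (P g)) (n : ℕ) (f g : E) :
    inner 𝕜 ((U ^ n) f) g = inner 𝕜 f ((P ^ n) g) := by
  induction n generalizing f with
  | zero => simp
  | succ n ih => rw [pow_succ, pow_succ', mul_apply_eq_comp, ih, hadj, mul_apply_eq_comp]

theorem MeasureTheory.L2.integral_sq_eq_norm_sq {X : Type*} [MeasurableSpace X] {μ : Measure X}
    {f : Lp ℝ 2 μ} {g : X → ℝ} (hfg : f =ᵐ[μ] g) : ∫ x, g x ^ 2 ∂μ = ‖f‖ ^ 2 := by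
  rw [← real_inner_self_eq_norm_sq, L2.inner_def]
  refine integral_congr_ae ?_
  filter_upwards [hfg] with x hx
  simp [hx, sq]

section Koopman

variable {X : Type*} [MeasurableSpace X] {μ : Measure X} {T : X → X}
  (hT : MeasurePreserving T μ μ) {U : Lp ℝ 2 μ →L[ℝ] Lp ℝ 2 μ}
  (hU : ∀ f : Lp ℝ 2 μ, ⇑(U f) =ᵐ[μ] fun x => f (T x))
include hT hU

theorem koopman_pow_apply (n : ℕ) (f : Lp ℝ 2 μ) :
    (U ^ n) f = Lp.compMeasurePreservingₗᵢ ℝ T^[n] (hT.iterate n) f := by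
  have hU' : ⇑U = Lp.compMeasurePreserving T hT := funext fun f =>
    Lp.ext ((hU f).trans (Lp.coeFn_compMeasurePreserving f hT).symm)
  rw [FunLike.coe_pow_eq_iterate, hU', Lp.compMeasurePreserving_iterate]
  rfl

theorem inner_koopman_pow_apply_pow_add (f : Lp ℝ 2 μ) (m j : ℕ) :
    inner ℝ ((U ^ m) f) ((U ^ (m + j)) f) = inner ℝ f ((U ^ j) f) := by
  rw [pow_add, mul_apply_eq_comp, koopman_pow_apply hT hU m,
    koopman_pow_apply hT hU m, LinearIsometry.inner_map_map]

theorem sum_koopman_pow_apply_ae_eq (f : Lp ℝ 2 μ) (N : ℕ) :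
    ⇑(∑ n ∈ range N, (U ^ n) f) =ᵐ[μ] fun x => ∑ n ∈ range N, f (T^[n] x) := by
  have hterm : ∀ n, ⇑((U ^ n) f) =ᵐ[μ] fun x => f (T^[n] x) := fun n => by
    rw [koopman_pow_apply hT hU]
    exact Lp.coeFn_compMeasurePreserving f (hT.iterate n)
  filter_upwards [Lp.coeFn_fun_finsetSum (range N) fun n => (U ^ n) f,
    ae_all_iff.mpr hterm] with x hsum hx
  simp only [hsum, hx]

end Koopman

theorem stmt14_general {X : Type*} [MeasurableSpace X] (α : Measure X)
    (T : X → X) (hT : MeasurePreserving T α α)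
    (U P : Lp ℝ 2 α →L[ℝ] Lp ℝ 2 α)
    (hU : ∀ f : Lp ℝ 2 α, ⇑(U f) =ᵐ[α] fun x => f (T x))
    (hadj : ∀ f g : Lp ℝ 2 α, (inner ℝ (U f) g : ℝ) = inner ℝ f (P g))
    (ψ : Lp ℝ 2 α)
    (hsum : Summable fun n : ℕ => ‖(P ^ n) ψ‖) :
    ∃ σ2 : ℝ, Tendsto
      (fun N : ℕ => (N : ℝ)⁻¹ * ∫ x, (∑ n ∈ Finset.range N, ψ (T^[n] x)) ^ 2 ∂α)
      atTop (nhds σ2) := by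
  have hc : Summable fun j => inner ℝ ψ ((U ^ j) ψ) := by
    refine Summable.of_norm_bounded (hsum.mul_left ‖ψ‖) fun j => ?_
    rw [Real.norm_eq_abs, real_inner_comm, inner_pow_apply_eq_inner_pow_apply hadj]
    exact abs_real_inner_le_norm ψ ((P ^ j) ψ)
  refine ⟨_, (tendsto_inv_mul_norm_sum_range_sq (v := fun n => (U ^ n) ψ)
    (inner_koopman_pow_apply_pow_add hT hU ψ) hc).congr fun N => ?_⟩
  rw [L2.integral_sq_eq_norm_sq (sum_koopman_pow_apply_ae_eq hT hU ψ N)]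

/-- Existence of the asymptotic variance in Gordin's theorem: for an ergodic
measure-preserving system with transfer operator `P = U*`, if `ψ ∈ L²` has mean zero and
`∑_n ‖Pⁿψ‖ < ∞`, then `σ² = lim (1/N) ∫ (∑_{n<N} ψ∘Tⁿ)² dα` exists and is finite. -/
theorem stmt14 {X : Type*} [MeasurableSpace X] (α : Measure X) [IsProbabilityMeasure α]
    (T : X → X) (hT : MeasurePreserving T α α) (herg : Ergodic T α)
    (U P : Lp ℝ 2 α →L[ℝ] Lp ℝ 2 α)
    (hU : ∀ f : Lp ℝ 2 α, ⇑(U f) =ᵐ[α] fun x => f (T x))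
    (hadj : ∀ f g : Lp ℝ 2 α, (inner ℝ (U f) g : ℝ) = inner ℝ f (P g))
    (ψ : Lp ℝ 2 α) (hmean : ∫ x, ψ x ∂α = 0)
    (hsum : Summable fun n : ℕ => ‖(P ^ n) ψ‖) :
    ∃ σ2 : ℝ, Tendsto
      (fun N : ℕ => (N : ℝ)⁻¹ * ∫ x, (∑ n ∈ Finset.range N, ψ (T^[n] x)) ^ 2 ∂α)
      atTop (nhds σ2) :=
  stmt14_general α T hT U P hU hadj ψ hsum
end
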